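/- arXiv:0801.0281 — 3 statements merged into one kernel-verified Lean document; each statement's English description precedes it below -/
import Mathlib

section
/- Let U = [-1,1] and consider the one-dimensional control problem ẋ = u, x(0) = x⁰, minimizing J = ∫₀¹ (x(t)² − u(t)²) dt over measurable controls u: [0,1] → [-1,1]. The function V(x,τ) defined piecewise by: V(x,τ) = (1/3)[x³ − (x+τ−1)³] + τ − 1 if x+τ ≥ 1; (1/3)x³ + τ − 1 if x+τ < 1 and x ≥ 0; −(1/3)x³ + τ − 1 if −x+τ < 1 and x < 0; (1/3)[−x³ − (−x+τ−1)³] + τ − 1 if −x+τ ≥ 1, is a C¹ function on ℝ × (0,1) satisfying the Hamilton–Jacobi–Bellman equation −∂V/∂τ + |∂V/∂x| − x² + 1 = 0 on ℝ × (0,1) with V(x,1) = 0. -/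
/-!
For `τ ≤ 1` the piecewise formula equals `b x τ + b (-x) τ + τ - 1` with
`b a τ = (a⁺³ - (a + τ - 1)⁺³) / 3`: at most one of `x`, `-x` is positive, and at most one of
`x + τ - 1`, `-x + τ - 1`. Since `t ↦ t⁺³` is `C¹` with derivative `3 t⁺²`, this expression is
`C¹` on all of `ℝ²`, and its partial derivatives are explicit. For `x ≥ 0` and `m = (x + τ - 1)⁺`
one gets `V_x = x² - m² ≥ 0` (as `m ≤ x`) and `V_τ = 1 - m²`, so the HJB residual
`-(1 - m²) + (x² - m²) - x² + 1` vanishes; the case `x ≤ 0` is symmetric.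
-/

open Set Topology

lemma hasDerivAt_posPart_pow_three (s : ℝ) : HasDerivAt (fun t : ℝ => t⁺ ^ 3) (3 * s⁺ ^ 2) s := by
  have hcont : Continuous fun t : ℝ => t⁺ := lipschitzWith_posPart.continuous
  refine hasDerivAt_of_hasDerivAt_of_ne' (f := fun t : ℝ => t⁺ ^ 3) (g := fun t => 3 * t⁺ ^ 2)
    (x := 0) (fun y hy => ?_) (hcont.pow 3).continuousAt
    (continuous_const.mul (hcont.pow 2)).continuousAt s
  rcases hy.lt_or_gt with hy | hy
  · rw [posPart_eq_zero.2 hy.le]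
    refine (hasDerivAt_const y (0 : ℝ)).congr_of_eventuallyEq ?_ |>.congr_deriv (by ring)
    filter_upwards [Iio_mem_nhds hy] with t ht
    rw [posPart_eq_zero.2 (le_of_lt ht)]
    ring
  · rw [posPart_eq_self.2 hy.le]
    refine (hasDerivAt_pow 3 y).congr_of_eventuallyEq ?_ |>.congr_deriv (by ring)
    filter_upwards [Ioi_mem_nhds hy] with t ht
    rw [posPart_eq_self.2 (le_of_lt ht)]

lemma contDiff_posPart_pow_three : ContDiff ℝ 1 fun t : ℝ => t⁺ ^ 3 := by
  rw [contDiff_one_iff_deriv]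
  refine ⟨fun s => (hasDerivAt_posPart_pow_three s).differentiableAt, ?_⟩
  rw [funext fun s => (hasDerivAt_posPart_pow_three s).deriv]
  exact continuous_const.mul (lipschitzWith_posPart.continuous.pow 2)

noncomputable def valueBranch (a τ : ℝ) : ℝ := (a⁺ ^ 3 - (a + τ - 1)⁺ ^ 3) / 3

noncomputable def hjbValue (x τ : ℝ) : ℝ := valueBranch x τ + valueBranch (-x) τ + τ - 1

noncomputable def hjbPiecewise (x τ : ℝ) : ℝ :=
  if 1 ≤ x + τ then (x ^ 3 - (x + τ - 1) ^ 3) / 3 + τ - 1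
  else if 0 ≤ x then x ^ 3 / 3 + τ - 1
  else if -x + τ < 1 then -(x ^ 3) / 3 + τ - 1
  else (-(x ^ 3) - (-x + τ - 1) ^ 3) / 3 + τ - 1

lemma hjbPiecewise_eq_hjbValue {x τ : ℝ} (hτ : τ ≤ 1) : hjbPiecewise x τ = hjbValue x τ := by
  have pos {a : ℝ} (ha : 0 ≤ a) : a⁺ = a := posPart_eq_self.2 ha
  have zero {a : ℝ} (ha : a ≤ 0) : a⁺ = 0 := posPart_eq_zero.2 ha
  unfold hjbPiecewise hjbValue valueBranch
  split_ifs with h₁ h₂ h₃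
  · rw [pos (by linarith : 0 ≤ x), zero (by linarith : -x ≤ 0), pos (by linarith),
      zero (by linarith : -x + τ - 1 ≤ 0)]
    ring
  · rw [pos h₂, zero (by linarith : -x ≤ 0), zero (by linarith : x + τ - 1 ≤ 0),
      zero (by linarith : -x + τ - 1 ≤ 0)]
    ring
  · rw [zero (by linarith : x ≤ 0), pos (by linarith : 0 ≤ -x), zero (by linarith : x + τ - 1 ≤ 0),
      zero (by linarith : -x + τ - 1 ≤ 0)]
    ring
  · rw [zero (by linarith : x ≤ 0), pos (by linarith : 0 ≤ -x), zero (by linarith : x + τ - 1 ≤ 0),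
      pos (by linarith : 0 ≤ -x + τ - 1)]
    ring

lemma contDiff_valueBranch : ContDiff ℝ 1 fun p : ℝ × ℝ => valueBranch p.1 p.2 :=
  ((contDiff_posPart_pow_three.comp contDiff_fst).sub
    (contDiff_posPart_pow_three.comp ((contDiff_fst.add contDiff_snd).sub contDiff_const))).div_const 3

lemma contDiff_hjbValue : ContDiff ℝ 1 fun p : ℝ × ℝ => hjbValue p.1 p.2 :=
  ((contDiff_valueBranch.add (contDiff_valueBranch.comp (contDiff_fst.neg.prodMk contDiff_snd))).add
    contDiff_snd).sub contDiff_const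

lemma hasDerivAt_valueBranch_fst (a τ : ℝ) :
    HasDerivAt (valueBranch · τ) (a⁺ ^ 2 - (a + τ - 1)⁺ ^ 2) a := by
  have h := ((hasDerivAt_posPart_pow_three a).sub
    ((hasDerivAt_posPart_pow_three (a + τ - 1)).comp a
      (((hasDerivAt_id a).add_const τ).sub_const 1))).div_const 3
  exact h.congr_deriv (by ring)

lemma hasDerivAt_valueBranch_snd (a τ : ℝ) :
    HasDerivAt (valueBranch a ·) (-(a + τ - 1)⁺ ^ 2) τ := by
  have h := ((hasDerivAt_posPart_pow_three (a + τ - 1)).comp τ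
      (((hasDerivAt_id τ).const_add a).sub_const 1)).const_sub (a⁺ ^ 3) |>.div_const 3
  exact h.congr_deriv (by ring)

lemma hasDerivAt_hjbValue_fst (x τ : ℝ) :
    HasDerivAt (hjbValue · τ)
      (x⁺ ^ 2 - (x + τ - 1)⁺ ^ 2 - ((-x)⁺ ^ 2 - (-x + τ - 1)⁺ ^ 2)) x :=
  (((hasDerivAt_valueBranch_fst x τ).add ((hasDerivAt_valueBranch_fst (-x) τ).comp x
    (hasDerivAt_neg x))).add_const τ |>.sub_const 1).congr_deriv (by ring)

lemma hasDerivAt_hjbValue_snd (x τ : ℝ) :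
    HasDerivAt (hjbValue x ·) (1 - (x + τ - 1)⁺ ^ 2 - (-x + τ - 1)⁺ ^ 2) τ :=
  (((hasDerivAt_valueBranch_snd x τ).add (hasDerivAt_valueBranch_snd (-x) τ)).add
    (hasDerivAt_id τ) |>.sub_const 1).congr_deriv (by ring)

lemma hjbValue_hjb_residual_eq_zero (x : ℝ) {τ : ℝ} (hτ : τ ≤ 1) :
    -(deriv (hjbValue x ·) τ) + |deriv (hjbValue · τ) x| - x ^ 2 + 1 = 0 := by
  rw [(hasDerivAt_hjbValue_snd x τ).deriv, (hasDerivAt_hjbValue_fst x τ).deriv]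
  rcases le_total 0 x with hx | hx
  · have hm : (x + τ - 1)⁺ ≤ x := sup_le (by linarith) hx
    rw [posPart_eq_self.2 hx, posPart_eq_zero.2 (neg_nonpos.2 hx),
      posPart_eq_zero.2 (by linarith : -x + τ - 1 ≤ 0),
      abs_of_nonneg (by nlinarith [posPart_nonneg (x + τ - 1)])]
    ring
  · have hm : (-x + τ - 1)⁺ ≤ -x := sup_le (by linarith) (neg_nonneg.2 hx)
    rw [posPart_eq_zero.2 hx, posPart_eq_self.2 (neg_nonneg.2 hx),
      posPart_eq_zero.2 (by linarith : x + τ - 1 ≤ 0),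
      abs_of_nonpos (by nlinarith [posPart_nonneg (-x + τ - 1)])]
    ring

lemma hjbValue_one (x : ℝ) : hjbValue x 1 = 0 := by
  simp [hjbValue, valueBranch]

/-- The piecewise function `V` solves the HJB equation
`−V_τ + |V_x| − x² + 1 = 0` on `ℝ × (0,1)` classically (being `C¹` there),
with the terminal condition `V(x,1) = 0`, for the problem `ẋ = u`, `u ∈ [-1,1]`,
cost `∫₀¹ (x² − u²) dt`. -/
theorem hjb_example_classical_solution :
    let V : ℝ → ℝ → ℝ := fun x τ =>
      if 1 ≤ x + τ then (x ^ 3 - (x + τ - 1) ^ 3) / 3 + τ - 1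
      else if 0 ≤ x then x ^ 3 / 3 + τ - 1
      else if -x + τ < 1 then -(x ^ 3) / 3 + τ - 1
      else (-(x ^ 3) - (-x + τ - 1) ^ 3) / 3 + τ - 1
    ContDiffOn ℝ 1 (fun p : ℝ × ℝ => V p.1 p.2) (univ ×ˢ Ioo (0 : ℝ) 1) ∧
    (∀ x : ℝ, ∀ τ ∈ Ioo (0 : ℝ) 1,
      -(deriv (fun s => V x s) τ) + |deriv (fun y => V y τ) x| - x ^ 2 + 1 = 0) ∧
    (∀ x : ℝ, V x 1 = 0) := by
  intro V
  have hV {x τ : ℝ} (hτ : τ ≤ 1) : V x τ = hjbValue x τ := hjbPiecewise_eq_hjbValue hτ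
  refine ⟨contDiff_hjbValue.contDiffOn.congr fun p hp => hV hp.2.2.le,
    fun x τ hτ => ?_, fun x => (hV le_rfl).trans (hjbValue_one x)⟩
  have hτ_nhds : (V x ·) =ᶠ[𝓝 τ] (hjbValue x ·) := by
    filter_upwards [Iio_mem_nhds hτ.2] with s hs using hV hs.le
  rw [hτ_nhds.deriv_eq, funext fun y => (hV hτ.2.le : V y τ = _)]
  exact hjbValue_hjb_residual_eq_zero x hτ.2.le
end

section
/- For the control problem ẋ = u, u(t) ∈ [-1,1], with cost J(x⁰; u) = ∫₀¹ (x(t)² − u(t)²) dt and initial data x(τ) = 0 with τ ∈ [0,1), the infimum of the cost over all measurable controls equals τ − 1, but no admissible control attains this infimum (there is no optimal control). -/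
/-!
Since `u² ≤ 1`, the cost is at least `∫ x² - (1 - τ) ≥ τ - 1`. Equality would force `x ≡ 0`,
hence `u = ẋ = 0` on `(τ, 1)`, and then the cost is `0 > τ - 1`.

The infimum is approached by fast oscillations `x t = w (ω (t - τ)) / ω`, where
`w = arcsin (√(1 - δ²) sin ·)` is a smoothed triangle wave: `|x| ≤ π / (2ω)`, while
`1 - ẋ² = δ² / (cos² + δ² sin²)` has the primitive
`δ (s + arctan ((δ - 1) sin s cos s / (cos² s + δ sin² s)))`, so its integral over `[0, L]` is at
most `δ (L + π / 2)`. With `δ = 1 / ω` the cost is `τ - 1 + O(1 / ω)`.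
-/

open Set Real MeasureTheory intervalIntegral Filter

def controlCosts (τ : ℝ) : Set ℝ :=
  {J : ℝ | ∃ u x : ℝ → ℝ, Measurable u ∧ (∀ t, u t ∈ Icc (-1 : ℝ) 1) ∧
    x τ = 0 ∧ (∀ t ∈ Icc τ 1, HasDerivAt x (u t) t) ∧ J = ∫ t in τ..1, (x t ^ 2 - u t ^ 2)}

section Admissible

variable {a b : ℝ} {u x : ℝ → ℝ}

lemma intervalIntegrable_sq_of_mem_Icc (hu : Measurable u) (hu1 : ∀ t, u t ∈ Icc (-1 : ℝ) 1) :
    IntervalIntegrable (fun t => u t ^ 2) volume a b := by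
  refine (intervalIntegrable_const (c := (1 : ℝ))).mono_fun (hu.pow_const 2).aestronglyMeasurable
    (ae_of_all _ fun t => ?_)
  simpa [abs_le] using hu1 t

lemma integral_sq_sub_sq_eq (hx : IntervalIntegrable (fun t => x t ^ 2) volume a b)
    (hu : IntervalIntegrable (fun t => u t ^ 2) volume a b) :
    ∫ t in a..b, (x t ^ 2 - u t ^ 2)
      = (∫ t in a..b, x t ^ 2) + (∫ t in a..b, (1 - u t ^ 2)) - (b - a) := by
  have hu' : IntervalIntegrable (fun t => 1 - u t ^ 2) volume a b := intervalIntegrable_const.sub hu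
  calc ∫ t in a..b, (x t ^ 2 - u t ^ 2) = ∫ t in a..b, (x t ^ 2 + (1 - u t ^ 2) - 1) := by
        congr 1; ext t; ring
    _ = _ := by
        rw [integral_sub (hx.add hu') intervalIntegrable_const, integral_add hx hu']
        simp

lemma integral_sq_le_integral_sq_sub_sq_add (hab : a ≤ b) (hu : Measurable u)
    (hu1 : ∀ t, u t ∈ Icc (-1 : ℝ) 1) (hx : ∀ t ∈ Icc a b, HasDerivAt x (u t) t) :
    ∫ t in a..b, x t ^ 2 ≤ (∫ t in a..b, (x t ^ 2 - u t ^ 2)) + (b - a) := by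
  have hxc : ContinuousOn x (Icc a b) := fun t ht => (hx t ht).continuousAt.continuousWithinAt
  rw [integral_sq_sub_sq_eq ((hxc.pow 2).intervalIntegrable_of_Icc hab)
    (intervalIntegrable_sq_of_mem_Icc hu hu1)]
  have : 0 ≤ ∫ t in a..b, (1 - u t ^ 2) := integral_nonneg hab fun t _ => by
    simpa [abs_le] using hu1 t
  linarith

lemma eqOn_zero_of_integral_sq_nonpos (hab : a < b) (hx : ContinuousOn x (Icc a b))
    (h : ∫ t in a..b, x t ^ 2 ≤ 0) : EqOn x 0 (Icc a b) := by
  intro t ht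
  by_contra hne
  exact h.not_gt (integral_pos hab (hx.pow 2) (fun s _ => sq_nonneg (x s))
    ⟨t, ht, sq_pos_of_ne_zero hne⟩)

end Admissible

lemma sub_one_mem_lowerBounds_controlCosts {τ : ℝ} (hτ : τ ≤ 1) :
    τ - 1 ∈ lowerBounds (controlCosts τ) := by
  rintro _ ⟨u, x, hu, hu1, -, hx, rfl⟩
  have := integral_sq_le_integral_sq_sub_sq_add hτ hu hu1 hx
  have : 0 ≤ ∫ t in τ..1, x t ^ 2 := integral_nonneg hτ fun t _ => sq_nonneg (x t)
  linarith

lemma sub_one_notMem_controlCosts {τ : ℝ} (hτ : τ < 1) : τ - 1 ∉ controlCosts τ := by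
  rintro ⟨u, x, hu, hu1, -, hx, hJ⟩
  have hxc : ContinuousOn x (Icc τ 1) := fun t ht => (hx t ht).continuousAt.continuousWithinAt
  have hx0 : EqOn x 0 (Icc τ 1) := eqOn_zero_of_integral_sq_nonpos hτ hxc
    (by linarith [integral_sq_le_integral_sq_sub_sq_add hτ.le hu hu1 hx])
  have hu0 : EqOn u 0 (Ioo τ 1) := fun t ht =>
    (hx t (Ioo_subset_Icc_self ht)).unique <| (hasDerivAt_const t 0).congr_of_eventuallyEq <|
      eventuallyEq_of_mem (Icc_mem_nhds ht.1 ht.2) hx0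
  have hcost : ∫ t in τ..1, (x t ^ 2 - u t ^ 2) = 0 := by
    rw [integral_congr_Ioo_of_le hτ.le (g := fun _ => 0) fun t ht => by
      simp [hx0 (Ioo_subset_Icc_self ht), hu0 ht]]
    simp
  linarith

noncomputable def smoothTriangleWave (δ s : ℝ) : ℝ := arcsin (√(1 - δ ^ 2) * sin s)

noncomputable def smoothTriangleWaveDeriv (δ s : ℝ) : ℝ :=
  √(1 - δ ^ 2) * cos s / √(cos s ^ 2 + δ ^ 2 * sin s ^ 2)

lemma cos_sq_add_mul_sin_sq_pos {δ : ℝ} (hδ : 0 < δ) (s : ℝ) :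
    0 < cos s ^ 2 + δ * sin s ^ 2 := by
  rcases eq_or_ne (sin s) 0 with h | h
  · nlinarith [sin_sq_add_cos_sq s]
  · positivity

/-- `s + arctan (…)` is the branch of `arctan (δ tan s)` that is continuous across the poles
of `tan`. -/
lemma hasDerivAt_add_arctan_sin_mul_cos_div {δ : ℝ} (hδ : 0 < δ) (s : ℝ) :
    HasDerivAt (fun s => s + arctan ((δ - 1) * sin s * cos s / (cos s ^ 2 + δ * sin s ^ 2)))
      (δ / (cos s ^ 2 + δ ^ 2 * sin s ^ 2)) s := by
  have hD := cos_sq_add_mul_sin_sq_pos hδ s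
  have hE := cos_sq_add_mul_sin_sq_pos (pow_pos hδ 2) s
  have hq : HasDerivAt (fun s => (δ - 1) * sin s * cos s / (cos s ^ 2 + δ * sin s ^ 2)) _ s :=
    (((hasDerivAt_sin s).const_mul (δ - 1)).mul (hasDerivAt_cos s)).div
      (((hasDerivAt_cos s).pow 2).add (((hasDerivAt_sin s).pow 2).const_mul δ)) hD.ne'
  refine ((hasDerivAt_id' s).add hq.arctan).congr_deriv ?_
  have h1 := sin_sq_add_cos_sq s
  field_simp
  simp only [Pi.mul_apply, Nat.cast_ofNat]
  linear_combination δ * (cos s ^ 2 + δ ^ 2 * sin s ^ 2) * (sin s ^ 2 + cos s ^ 2) * h1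

section SmoothTriangleWave

variable {δ : ℝ}

lemma one_sub_sq_mul_sin_sq (hδ : 0 < δ) (hδ1 : δ ≤ 1) (s : ℝ) :
    1 - (√(1 - δ ^ 2) * sin s) ^ 2 = cos s ^ 2 + δ ^ 2 * sin s ^ 2 := by
  rw [mul_pow, sq_sqrt (by nlinarith)]
  linear_combination -(sin_sq_add_cos_sq s)

lemma hasDerivAt_smoothTriangleWave (hδ : 0 < δ) (hδ1 : δ ≤ 1) (s : ℝ) :
    HasDerivAt (smoothTriangleWave δ) (smoothTriangleWaveDeriv δ s) s := by
  have hE := cos_sq_add_mul_sin_sq_pos (pow_pos hδ 2) s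
  have h := one_sub_sq_mul_sin_sq hδ hδ1 s
  obtain ⟨h₁, h₂⟩ := abs_lt.1 <| (sq_lt_one_iff_abs_lt_one _).1 <|
    show (√(1 - δ ^ 2) * sin s) ^ 2 < 1 by linarith
  have := (hasDerivAt_arcsin h₁.ne' h₂.ne).comp s ((hasDerivAt_sin s).const_mul √(1 - δ ^ 2))
  refine this.congr_deriv ?_
  rw [h, smoothTriangleWaveDeriv]
  ring

lemma one_sub_smoothTriangleWaveDeriv_sq (hδ : 0 < δ) (hδ1 : δ ≤ 1) (s : ℝ) :
    1 - smoothTriangleWaveDeriv δ s ^ 2 = δ * (δ / (cos s ^ 2 + δ ^ 2 * sin s ^ 2)) := by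
  have hE := cos_sq_add_mul_sin_sq_pos (pow_pos hδ 2) s
  rw [smoothTriangleWaveDeriv, div_pow, mul_pow, sq_sqrt hE.le, sq_sqrt (by nlinarith)]
  field_simp
  linear_combination δ ^ 2 * (sin_sq_add_cos_sq s)

lemma smoothTriangleWaveDeriv_mem_Icc (hδ : 0 < δ) (hδ1 : δ ≤ 1) (s : ℝ) :
    smoothTriangleWaveDeriv δ s ∈ Icc (-1 : ℝ) 1 := by
  have h := one_sub_smoothTriangleWaveDeriv_sq hδ hδ1 s
  have hE := cos_sq_add_mul_sin_sq_pos (pow_pos hδ 2) s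
  have : 0 ≤ δ * (δ / (cos s ^ 2 + δ ^ 2 * sin s ^ 2)) := by positivity
  rw [mem_Icc, ← abs_le, ← sq_le_one_iff_abs_le_one]
  linarith

lemma continuous_smoothTriangleWaveDeriv (hδ : 0 < δ) :
    Continuous (smoothTriangleWaveDeriv δ) := by
  unfold smoothTriangleWaveDeriv
  refine Continuous.div (by fun_prop) (by fun_prop) fun s => ?_
  exact (sqrt_pos.2 (cos_sq_add_mul_sin_sq_pos (pow_pos hδ 2) s)).ne'

lemma integral_one_sub_smoothTriangleWaveDeriv_sq_le (hδ : 0 < δ) (hδ1 : δ ≤ 1) (L : ℝ) :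
    ∫ s in 0..L, (1 - smoothTriangleWaveDeriv δ s ^ 2) ≤ δ * (L + π / 2) := by
  simp_rw [one_sub_smoothTriangleWaveDeriv_sq hδ hδ1]
  have hE s := cos_sq_add_mul_sin_sq_pos (pow_pos hδ 2) s
  have hcont : Continuous fun s => δ * (δ / (cos s ^ 2 + δ ^ 2 * sin s ^ 2)) :=
    continuous_const.mul (continuous_const.div (by fun_prop) fun s => (hE s).ne')
  rw [integral_eq_sub_of_hasDerivAt
    (fun s _ => (hasDerivAt_add_arctan_sin_mul_cos_div hδ s).const_mul δ)
    (hcont.intervalIntegrable _ _)]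
  simp only [sin_zero, mul_zero, zero_mul, zero_div, arctan_zero, add_zero, sub_zero]
  gcongr
  exact (arctan_lt_pi_div_two _).le

lemma integral_one_sub_smoothTriangleWaveDeriv_sq_comp_le (hδ : 0 < δ) (hδ1 : δ ≤ 1) {ω : ℝ}
    (hω : 0 < ω) (a b : ℝ) :
    ∫ t in a..b, (1 - smoothTriangleWaveDeriv δ (ω * t - ω * a) ^ 2)
      ≤ δ * ((b - a) + π / 2 * ω⁻¹) := by
  rw [integral_comp_mul_sub (fun s => 1 - smoothTriangleWaveDeriv δ s ^ 2) hω.ne', sub_self,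
    smul_eq_mul, ← mul_sub]
  calc ω⁻¹ * ∫ s in 0..ω * (b - a), (1 - smoothTriangleWaveDeriv δ s ^ 2)
      ≤ ω⁻¹ * (δ * (ω * (b - a) + π / 2)) := by
        gcongr
        exact integral_one_sub_smoothTriangleWaveDeriv_sq_le hδ hδ1 _
    _ = δ * ((b - a) + π / 2 * ω⁻¹) := by field_simp

lemma abs_smoothTriangleWave_le (δ s : ℝ) : |smoothTriangleWave δ s| ≤ π / 2 :=
  abs_le.2 ⟨neg_pi_div_two_le_arcsin _, arcsin_le_pi_div_two _⟩

end SmoothTriangleWave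

lemma HasDerivAt.comp_mul_sub_div {f : ℝ → ℝ} {f' ω c t : ℝ} (hω : ω ≠ 0)
    (hf : HasDerivAt f f' (ω * t - c)) : HasDerivAt (fun t => f (ω * t - c) / ω) f' t :=
  ((hf.comp t (((hasDerivAt_id t).const_mul ω).sub_const c)).div_const ω).congr_deriv
    (by field_simp)

lemma exists_mem_controlCosts_le {τ ω : ℝ} (hτ : τ ≤ 1) (hω : 1 ≤ ω) :
    ∃ J ∈ controlCosts τ, J ≤ τ - 1 + (5 * (1 - τ) + 2) / ω := by
  have hω0 : 0 < ω := by linarith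
  have hinv : 0 < ω⁻¹ := inv_pos.2 hω0
  have hinv1 : ω⁻¹ ≤ 1 := inv_le_one_of_one_le₀ hω
  set u := fun t => smoothTriangleWaveDeriv ω⁻¹ (ω * t - ω * τ) with hu_def
  set x := fun t => smoothTriangleWave ω⁻¹ (ω * t - ω * τ) / ω with hx_def
  have hu : Continuous u := (continuous_smoothTriangleWaveDeriv hinv).comp (by fun_prop)
  have hx : Continuous x := by
    simp only [hx_def, smoothTriangleWave]
    fun_prop
  refine ⟨_, ⟨u, x, hu.measurable, fun t => smoothTriangleWaveDeriv_mem_Icc hinv hinv1 _,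
    by simp [hx_def, smoothTriangleWave],
    fun t _ => (hasDerivAt_smoothTriangleWave hinv hinv1 _).comp_mul_sub_div hω0.ne', rfl⟩, ?_⟩
  have hx2 : ∫ t in τ..1, x t ^ 2 ≤ (1 - τ) * (π / 2 * ω⁻¹) ^ 2 := by
    rw [← smul_eq_mul, ← intervalIntegral.integral_const]
    refine integral_mono_on hτ ((hx.pow 2).intervalIntegrable _ _) intervalIntegrable_const
      fun t _ => ?_
    rw [← sq_abs, hx_def, abs_div, abs_of_pos hω0, div_eq_mul_inv]
    gcongr
    exact abs_smoothTriangleWave_le _ _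
  have hu2 : ∫ t in τ..1, (1 - u t ^ 2) ≤ ω⁻¹ * ((1 - τ) + π / 2 * ω⁻¹) :=
    integral_one_sub_smoothTriangleWaveDeriv_sq_comp_le hinv hinv1 hω0 τ 1
  rw [integral_sq_sub_sq_eq ((hx.pow 2).intervalIntegrable _ _)
    ((hu.pow 2).intervalIntegrable _ _), div_eq_mul_inv]
  have hπ : π / 2 * ω⁻¹ ≤ 2 * ω⁻¹ := by gcongr; linarith [pi_le_four]
  have hw : ω⁻¹ * ω⁻¹ ≤ ω⁻¹ := mul_le_of_le_one_left hinv.le hinv1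
  have hsq : (π / 2 * ω⁻¹) ^ 2 ≤ 4 * ω⁻¹ := by
    nlinarith [mul_le_mul hπ hπ (by positivity) (by positivity)]
  nlinarith [mul_le_mul_of_nonneg_left hsq (sub_nonneg.2 hτ)]

lemma exists_mem_controlCosts_lt {τ ε : ℝ} (hτ : τ ≤ 1) (hε : 0 < ε) :
    ∃ J ∈ controlCosts τ, J < τ - 1 + ε := by
  have hC : 0 < 5 * (1 - τ) + 2 := by linarith
  have hω : 1 ≤ (5 * (1 - τ) + 2) / ε + 1 := by linarith [div_pos hC hε]
  obtain ⟨J, hJ, hJle⟩ := exists_mem_controlCosts_le hτ hω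
  refine ⟨J, hJ, hJle.trans_lt ?_⟩
  rw [add_lt_add_iff_left, div_lt_iff₀ (by linarith), mul_add, mul_div_cancel₀ _ hε.ne']
  linarith

/-- For the problem `ẋ = u`, `u(t) ∈ [-1,1]`, `x(τ) = 0` with `τ ∈ [0,1)`, and
cost `∫_τ^1 (x² − u²) dt`, the infimum of the cost over all measurable admissible
controls equals `τ − 1`, but no admissible control attains it. -/
theorem no_optimal_control (τ : ℝ) (hτ : τ ∈ Ico (0 : ℝ) 1) :
    IsGLB {J : ℝ | ∃ u x : ℝ → ℝ, Measurable u ∧ (∀ t, u t ∈ Icc (-1 : ℝ) 1) ∧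
        x τ = 0 ∧ (∀ t ∈ Icc τ 1, HasDerivAt x (u t) t) ∧
        J = ∫ t in τ..1, (x t ^ 2 - u t ^ 2)} (τ - 1) ∧
    (τ - 1) ∉ {J : ℝ | ∃ u x : ℝ → ℝ, Measurable u ∧ (∀ t, u t ∈ Icc (-1 : ℝ) 1) ∧
        x τ = 0 ∧ (∀ t ∈ Icc τ 1, HasDerivAt x (u t) t) ∧
        J = ∫ t in τ..1, (x t ^ 2 - u t ^ 2)} := by
  refine ⟨⟨sub_one_mem_lowerBounds_controlCosts hτ.2.le, fun c hc => ?_⟩,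
    sub_one_notMem_controlCosts hτ.2⟩
  refine le_of_forall_pos_lt_add fun ε hε => ?_
  obtain ⟨J, hJ, hJlt⟩ := exists_mem_controlCosts_lt hτ.2.le hε
  exact (hc hJ).trans_lt hJlt
end

section
/- For any measurable control u: [τ,1] → [-1,1] and ε > 0, there exists a measurable control (e.g., a rapidly oscillating bang-bang control) whose trajectory from x(τ) = 0 yields cost ∫_τ^1 (x² − u²)dt < τ − 1 + ε; hence the value function of this problem at (0,τ) equals τ − 1. -/
/-!
Since `x² - u² ≥ -1`, every cost is at least `τ - 1`. To approach this bound, take for `u` the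
fast oscillation `k sin (N t)` clipped to `[-1, 1]`. It is continuous, so its primitive `x` is
an honest trajectory, and it is antiperiodic with antiperiod `π / N`, so `x` stays within
`2π / N` of `0` and `∫ x² = O(N⁻²)`. For fixed `N`, `u² → 1` as `k → ∞` off the null set of zeros
of `sin (N ·)`, so `∫ u² → 1 - τ` by dominated convergence.
-/

open Set Filter Topology MeasureTheory intervalIntegral Real Function

lemma Set.coe_projIcc_neg {α : Type*} [AddCommGroup α] [LinearOrder α] [IsOrderedAddMonoid α]
    {a : α} (ha : -a ≤ a) (y : α) :
    (projIcc (-a) a ha (-y) : α) = -projIcc (-a) a ha y := by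
  rw [coe_projIcc, coe_projIcc, max_min_distrib_left, max_eq_right ha, ← min_neg_neg,
    ← max_neg_neg, neg_neg]

lemma Set.sq_coe_projIcc_of_one_le_abs {y : ℝ} (hy : 1 ≤ |y|) :
    (projIcc (-1) 1 (by norm_num) y : ℝ) ^ 2 = 1 := by
  rcases le_abs'.mp hy with hy | hy
  · rw [projIcc_of_le_left _ hy]; norm_num
  · rw [projIcc_of_right_le _ hy]; norm_num

namespace Function.Antiperiodic

variable {E : Type*} [NormedAddCommGroup E] [NormedSpace ℝ E] {f : ℝ → E} {c : ℝ}

lemma intervalIntegral_add_two_mul_eq_zero (hf : Antiperiodic f c)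
    (hint : ∀ a b, IntervalIntegrable f volume a b) (a : ℝ) :
    ∫ s in a..a + 2 * c, f s = 0 := by
  have hshift : ∫ s in a + c..a + 2 * c, f s = -∫ s in a..a + c, f s := by
    rw [← intervalIntegral.integral_neg, two_mul, ← add_assoc, ← integral_comp_add_right f c]
    simp only [hf _]
  rw [← integral_add_adjacent_intervals (hint a (a + c)) (hint _ _), hshift, add_neg_cancel]

lemma periodic_intervalIntegral (hf : Antiperiodic f c)
    (hint : ∀ a b, IntervalIntegrable f volume a b) (a : ℝ) :
    Periodic (fun t ↦ ∫ s in a..t, f s) (2 * c) := fun t ↦ by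
  simp only [hf.periodic_two_mul.intervalIntegral_add_eq_add a t hint,
    hf.intervalIntegral_add_two_mul_eq_zero hint, add_zero]

lemma norm_intervalIntegral_le (hf : Antiperiodic f c)
    (hint : ∀ a b, IntervalIntegrable f volume a b) (hc : 0 < c) {C : ℝ} (hC : ∀ t, ‖f t‖ ≤ C)
    (a t : ℝ) : ‖∫ s in a..t, f s‖ ≤ C * (2 * c) := by
  obtain ⟨y, ⟨hay, hya⟩, hy⟩ :=
    (hf.periodic_intervalIntegral hint a).exists_mem_Ico (by positivity) t a
  rw [show (∫ s in a..t, f s) = ∫ s in a..y, f s from hy]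
  calc ‖∫ s in a..y, f s‖ ≤ C * |y - a| := norm_integral_le_of_norm_le_const fun s _ ↦ hC s
    _ ≤ C * (2 * c) := by
      have hC0 : 0 ≤ C := (norm_nonneg _).trans (hC 0)
      gcongr
      rw [abs_of_nonneg (by linarith)]
      linarith

end Function.Antiperiodic

lemma tendsto_intervalIntegral_sq_projIcc_nat_mul {g : ℝ → ℝ} (hg : Measurable g)
    (hg0 : volume (g ⁻¹' {0}) = 0) (a b : ℝ) :
    Tendsto (fun k : ℕ ↦ ∫ t in a..b, (projIcc (-1 : ℝ) 1 (by norm_num) (k * g t) : ℝ) ^ 2)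
      atTop (𝓝 (b - a)) := by
  have hlim : ∫ _ in a..b, (1 : ℝ) = b - a := by simp
  rw [← hlim]
  refine tendsto_integral_filter_of_dominated_convergence (fun _ ↦ 1)
    (Eventually.of_forall fun k ↦ ?_) (Eventually.of_forall fun k ↦ ?_) intervalIntegrable_const ?_
  · exact (((continuous_subtype_val.comp continuous_projIcc).measurable.comp
      (measurable_const.mul hg)).pow_const 2).aestronglyMeasurable
  · refine ae_of_all _ fun t _ ↦ ?_
    have hmem := (projIcc (-1 : ℝ) 1 (by norm_num) (k * g t)).2
    rw [norm_pow, Real.norm_eq_abs]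
    exact pow_le_one₀ (abs_nonneg _) (abs_le.mpr hmem)
  · have hae : ∀ᵐ t, g t ≠ 0 := measure_eq_zero_iff_ae_notMem.mp hg0
    filter_upwards [hae] with t ht _
    refine tendsto_const_nhds.congr' ?_
    have hgrow : Tendsto (fun k : ℕ ↦ (k : ℝ) * |g t|) atTop atTop :=
      tendsto_natCast_atTop_atTop.atTop_mul_const (abs_pos.mpr ht)
    filter_upwards [hgrow.eventually_ge_atTop 1] with k hk
    rw [sq_coe_projIcc_of_one_le_abs (by rwa [abs_mul, Nat.abs_cast])]

lemma volume_preimage_sin_mul_zero {N : ℝ} (hN : N ≠ 0) :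
    volume ((fun t ↦ sin (N * t)) ⁻¹' {0}) = 0 := by
  refine Countable.measure_zero ((countable_range fun n : ℤ ↦ n * π / N).mono ?_) _
  intro t ht
  obtain ⟨n, hn⟩ := sin_eq_zero_iff.mp ht
  exact ⟨n, show n * π / N = t by rw [hn, mul_div_cancel_left₀ _ hN]⟩

lemma sub_le_intervalIntegral_sq_sub_sq {u x : ℝ → ℝ} {a b : ℝ} (hab : a ≤ b)
    (hu : ∀ t ∈ Icc a b, u t ∈ Icc (-1 : ℝ) 1) :
    a - b ≤ ∫ t in a..b, (x t ^ 2 - u t ^ 2) := by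
  by_cases hint : IntervalIntegrable (fun t ↦ x t ^ 2 - u t ^ 2) volume a b
  · calc a - b = ∫ _ in a..b, (-1 : ℝ) := by simp
      _ ≤ _ := integral_mono_on hab intervalIntegrable_const hint fun t ht ↦ by
          nlinarith [sq_nonneg (x t), (hu t ht).1, (hu t ht).2]
  · -- a non-integrable cost has junk value `0 ≥ a - b`
    rw [intervalIntegral.integral_undef hint]
    linarith

lemma intervalIntegral_sq_primitive_sub_sq_le {u : ℝ → ℝ} {a b c : ℝ} (hu : Continuous u)
    (hper : Antiperiodic u c) (hc : 0 < c) (hu1 : ∀ t, |u t| ≤ 1) (hab : a ≤ b) :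
    ∫ t in a..b, ((∫ s in a..t, u s) ^ 2 - u t ^ 2) ≤
      (b - a) * (2 * c) ^ 2 - ∫ t in a..b, u t ^ 2 := by
  have hint : ∀ a b, IntervalIntegrable u volume a b := hu.intervalIntegrable
  have hx : Continuous fun t ↦ ∫ s in a..t, u s := continuous_primitive hint a
  have hx_le : ∀ t, (∫ s in a..t, u s) ^ 2 ≤ (2 * c) ^ 2 := fun t ↦ by
    have := hper.norm_intervalIntegral_le hint hc (C := 1) (by simpa using hu1) a t
    rw [one_mul, Real.norm_eq_abs] at this
    exact sq_le_sq' (abs_le.mp this).1 (abs_le.mp this).2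
  have hx2 : IntervalIntegrable (fun t ↦ (∫ s in a..t, u s) ^ 2) volume a b :=
    (hx.pow 2).intervalIntegrable _ _
  have hu2 : IntervalIntegrable (fun t ↦ u t ^ 2) volume a b := (hu.pow 2).intervalIntegrable _ _
  rw [integral_sub hx2 hu2]
  gcongr
  calc ∫ t in a..b, (∫ s in a..t, u s) ^ 2 ≤ ∫ _ in a..b, (2 * c) ^ 2 :=
        integral_mono_on hab hx2 intervalIntegrable_const fun t _ ↦ hx_le t
    _ = (b - a) * (2 * c) ^ 2 := by simp

lemma exists_control_cost_lt {τ ε : ℝ} (hτ : τ ≤ 1) (hε : 0 < ε) :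
    ∃ u x : ℝ → ℝ, Measurable u ∧ (∀ t, u t ∈ Icc (-1 : ℝ) 1) ∧
      x τ = 0 ∧ (∀ t ∈ Icc τ 1, HasDerivAt x (u t) t) ∧
      (∫ t in τ..1, (x t ^ 2 - u t ^ 2)) < τ - 1 + ε := by
  have hsmall : Tendsto (fun N : ℝ ↦ (1 - τ) * (2 * (π / N)) ^ 2) atTop (𝓝 0) := by
    simpa using (((tendsto_const_nhds (x := π)).div_atTop tendsto_id).const_mul 2).pow 2
      |>.const_mul (1 - τ)
  obtain ⟨N, hNε, hN⟩ :=
    ((hsmall.eventually (gt_mem_nhds (half_pos hε))).and (eventually_gt_atTop 0)).exists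
  let u : ℕ → ℝ → ℝ := fun k t ↦ projIcc (-1 : ℝ) 1 (by norm_num) (k * sin (N * t))
  have hu_cont : ∀ k, Continuous (u k) := fun k ↦ by fun_prop
  have hu_anti : ∀ k, Antiperiodic (u k) (π / N) := fun k t ↦ by
    simp only [u, mul_add, mul_div_cancel₀ _ hN.ne', sin_add_pi, mul_neg]
    exact coe_projIcc_neg _ _
  obtain ⟨k, hk⟩ := ((tendsto_intervalIntegral_sq_projIcc_nat_mul (by fun_prop)
    (volume_preimage_sin_mul_zero hN.ne') τ 1).eventually
    (lt_mem_nhds (show 1 - τ - ε / 2 < 1 - τ by linarith))).exists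
  refine ⟨u k, fun t ↦ ∫ s in τ..t, u k s, (hu_cont k).measurable,
    fun t ↦ (projIcc (-1 : ℝ) 1 _ _).2, integral_same,
    fun t _ ↦ ((hu_cont k).integral_hasStrictDerivAt τ t).hasDerivAt, ?_⟩
  calc _ ≤ (1 - τ) * (2 * (π / N)) ^ 2 - ∫ t in τ..1, u k t ^ 2 :=
        intervalIntegral_sq_primitive_sub_sq_le (hu_cont k) (hu_anti k) (by positivity)
          (fun t ↦ abs_le.mpr (projIcc (-1 : ℝ) 1 _ _).2) hτ
    _ < τ - 1 + ε := by linarith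

/-- For every `ε > 0` there is a measurable admissible control (e.g. a rapidly
oscillating bang-bang control) whose trajectory from `x(τ) = 0` has cost
`∫_τ^1 (x² − u²) dt < τ − 1 + ε`; consequently the value function of the problem
`ẋ = u`, `u ∈ [-1,1]`, cost `∫_τ^1 (x² − u²) dt`, at `(0,τ)` equals `τ − 1`. -/
theorem value_function_at_zero (τ : ℝ) (hτ : τ ∈ Ico (0 : ℝ) 1) :
    (∀ ε > 0, ∃ u x : ℝ → ℝ, Measurable u ∧ (∀ t, u t ∈ Icc (-1 : ℝ) 1) ∧
      x τ = 0 ∧ (∀ t ∈ Icc τ 1, HasDerivAt x (u t) t) ∧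
      (∫ t in τ..1, (x t ^ 2 - u t ^ 2)) < τ - 1 + ε) ∧
    IsGLB {J : ℝ | ∃ u x : ℝ → ℝ, Measurable u ∧ (∀ t, u t ∈ Icc (-1 : ℝ) 1) ∧
        x τ = 0 ∧ (∀ t ∈ Icc τ 1, HasDerivAt x (u t) t) ∧
        J = ∫ t in τ..1, (x t ^ 2 - u t ^ 2)} (τ - 1) := by
  have hτ1 : τ ≤ 1 := hτ.2.le
  have hcost := fun ε (hε : ε > 0) ↦ exists_control_cost_lt hτ1 hε
  refine ⟨hcost, ?_, fun b hb ↦ le_of_forall_pos_le_add fun ε hε ↦ ?_⟩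
  · rintro J ⟨u, x, -, hu, -, -, rfl⟩
    exact sub_le_intervalIntegral_sq_sub_sq hτ1 fun t _ ↦ hu t
  · obtain ⟨u, x, hmeas, hu, hx0, hx, hlt⟩ := hcost ε hε
    linarith [hb ⟨u, x, hmeas, hu, hx0, hx, rfl⟩]
end
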